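/- Let P be the algebra above and φ its symmetrizing form. For every basis element a ∈ Ω there exists a unique basis element b ∈ Ω such that ab = ±(∏_{i=1}^d e_i f_i)K, and moreover for this pair ab = ba (the sign (−1)^{ℓ(2d+1−ℓ)} is +1, where ℓ is the length of a). Hence the Gram matrix (φ(ab))_{a,b∈Ω} is, up to signs, a permutation matrix and is invertible. -/

import Mathlib

/-- Generators of the algebra `P`: `e i`, `f i` (`1 ≤ i ≤ d`) and `K`. -/
inductive SFGen (d : ℕ) : Type
  | e : Fin d → SFGen d
  | f : Fin d → SFGen d
  | K : SFGen d

/-- The defining relations of `P`: `K² = 1`, the `e i`, `f j` pairwise anticommute,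
and `K` anticommutes with every `e i` and `f i`. -/
inductive SFRel (d : ℕ) : FreeAlgebra ℂ (SFGen d) → FreeAlgebra ℂ (SFGen d) → Prop
  | Ksq : SFRel d (FreeAlgebra.ι ℂ (SFGen.K (d := d)) * FreeAlgebra.ι ℂ SFGen.K) 1
  | ee (i j : Fin d) : SFRel d (FreeAlgebra.ι ℂ (SFGen.e i) * FreeAlgebra.ι ℂ (SFGen.e j))
      (-(FreeAlgebra.ι ℂ (SFGen.e j) * FreeAlgebra.ι ℂ (SFGen.e i)))
  | ff (i j : Fin d) : SFRel d (FreeAlgebra.ι ℂ (SFGen.f i) * FreeAlgebra.ι ℂ (SFGen.f j))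
      (-(FreeAlgebra.ι ℂ (SFGen.f j) * FreeAlgebra.ι ℂ (SFGen.f i)))
  | ef (i j : Fin d) : SFRel d (FreeAlgebra.ι ℂ (SFGen.e i) * FreeAlgebra.ι ℂ (SFGen.f j))
      (-(FreeAlgebra.ι ℂ (SFGen.f j) * FreeAlgebra.ι ℂ (SFGen.e i)))
  | Ke (i : Fin d) : SFRel d (FreeAlgebra.ι ℂ (SFGen.K (d := d)) * FreeAlgebra.ι ℂ (SFGen.e i))
      (-(FreeAlgebra.ι ℂ (SFGen.e i) * FreeAlgebra.ι ℂ SFGen.K))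
  | Kf (i : Fin d) : SFRel d (FreeAlgebra.ι ℂ (SFGen.K (d := d)) * FreeAlgebra.ι ℂ (SFGen.f i))
      (-(FreeAlgebra.ι ℂ (SFGen.f i) * FreeAlgebra.ι ℂ SFGen.K))

/-- The algebra `P` generated by `e i`, `f i` (`1 ≤ i ≤ d`) and `K` with the above
relations. -/
def SF (d : ℕ) : Type := RingQuot (SFRel d)

noncomputable instance (d : ℕ) : Ring (SF d) := inferInstanceAs (Ring (RingQuot (SFRel d)))
noncomputable instance (d : ℕ) : Algebra ℂ (SF d) :=
  inferInstanceAs (Algebra ℂ (RingQuot (SFRel d)))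

/-- The generator `e i` of `P`. -/
noncomputable def eg (d : ℕ) (i : Fin d) : SF d :=
  RingQuot.mkAlgHom ℂ (SFRel d) (FreeAlgebra.ι ℂ (SFGen.e i))

/-- The generator `f i` of `P`. -/
noncomputable def fg (d : ℕ) (i : Fin d) : SF d :=
  RingQuot.mkAlgHom ℂ (SFRel d) (FreeAlgebra.ι ℂ (SFGen.f i))

/-- The generator `K` of `P`. -/
noncomputable def Kg (d : ℕ) : SF d :=
  RingQuot.mkAlgHom ℂ (SFRel d) (FreeAlgebra.ι ℂ SFGen.K)

/-- The monomial `(∏ᵢ e iᵐⁱ f iⁿⁱ) Kˡ` of `P`, in the order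
`e 1^{m₁} f 1^{n₁} ⋯ e d^{m_d} f d^{n_d} K^ℓ`. -/
noncomputable def SFmono (d : ℕ) (m n : Fin d → Bool) (ℓ : Bool) : SF d :=
  (List.ofFn (fun i : Fin d =>
      (if m i then eg d i else 1) * (if n i then fg d i else 1))).prod *
    (if ℓ then Kg d else 1)

/-- The top monomial `(∏ᵢ eᵢ fᵢ) K`. -/
noncomputable def topSF (d : ℕ) : SF d := SFmono d (fun _ => true) (fun _ => true) true



section Generic
variable {A : Type*} [Ring A] [Algebra ℂ A]

def sfsgn : List (ℂ × Bool × Bool) → ℂ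
  | [] => 1
  | x :: S => (if x.2.2 then (-1 : ℂ) ^ (S.countP (·.2.1)) else 1) *
      (if x.2.1 && x.2.2 then x.1 else 1) * sfsgn S

def sfmpP (W : List (A × ℂ × Bool × Bool)) : A :=
  (W.map fun x => if x.2.2.1 then x.1 else 1).prod
def sfmpQ (W : List (A × ℂ × Bool × Bool)) : A :=
  (W.map fun x => if x.2.2.2 then x.1 else 1).prod
def sfmpX (W : List (A × ℂ × Bool × Bool)) : A :=
  (W.map fun x => if xor x.2.2.1 x.2.2.2 then x.1 else 1).prod

lemma sfmpP_mul_anticomm (a : A) (W : List (A × ℂ × Bool × Bool))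
    (h : ∀ y ∈ W, a * y.1 = -(y.1 * a)) :
    sfmpP W * a = ((-1:ℂ) ^ (W.countP fun x => x.2.2.1)) • (a * sfmpP W) := by
  induction W with
  | nil => simp [sfmpP]
  | cons y W ih =>
    have hy := h y (List.mem_cons_self (a := y) (l := W))
    have hW : ∀ z ∈ W, a * z.1 = -(z.1 * a) := fun z hz => h z (List.mem_cons_of_mem y hz)
    have ih' := ih hW
    simp only [sfmpP, List.map_cons, List.prod_cons, List.countP_cons] at *
    rcases hb : y.2.2.1 with _ | _
    · simp only [hb, if_false, one_mul, mul_assoc, ih', Bool.false_eq_true, if_false, add_zero]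
    · have hy' : y.1 * a = -(a * y.1) := by rw [hy, neg_neg]
      simp only [hb, if_true, mul_assoc, ih']
      rw [mul_smul_comm, ← mul_assoc, hy', neg_mul, mul_assoc, smul_neg, pow_add, pow_one,
        mul_comm ((-1:ℂ)^_) (-1:ℂ), mul_smul, neg_one_smul]

lemma sfmp_mul (W : List (A × ℂ × Bool × Bool))
    (hpw : W.Pairwise fun x y => x.1 * y.1 = -(y.1 * x.1))
    (hsq : ∀ x ∈ W, x.1 * x.1 = algebraMap ℂ A x.2.1) :
    sfmpP W * sfmpQ W = sfsgn (W.map (·.2)) • sfmpX W := by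
  induction W with
  | nil => simp [sfmpP, sfmpQ, sfmpX, sfsgn]
  | cons y W ih =>
    rcases List.pairwise_cons.mp hpw with ⟨hy, hpw'⟩
    have hsq' : ∀ x ∈ W, x.1 * x.1 = algebraMap ℂ A x.2.1 :=
      fun x hx => hsq x (List.mem_cons_of_mem y hx)
    have ih' := ih hpw' hsq'
    have hcomm : sfmpP W * (if y.2.2.2 then y.1 else 1)
        = (if y.2.2.2 then (-1:ℂ) ^ (W.countP fun x => x.2.2.1) else 1) •
          ((if y.2.2.2 then y.1 else 1) * sfmpP W) := by
      rcases hb : y.2.2.2 with _ | _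
      · simp
      · simpa using sfmpP_mul_anticomm y.1 W hy
    have hheads : (if y.2.2.1 then y.1 else 1) * (if y.2.2.2 then y.1 else 1)
        = (if y.2.2.1 && y.2.2.2 then y.2.1 else 1) •
          ((if xor y.2.2.1 y.2.2.2 then y.1 else 1) : A) := by
      have := hsq y (List.mem_cons_self (a := y) (l := W))
      rcases hb1 : y.2.2.1 with _ | _ <;> rcases hb2 : y.2.2.2 with _ | _ <;>
        simp [hb1, hb2, this, Algebra.algebraMap_eq_smul_one]
    have hcnt : (List.map (fun x => x.2) W).countP (·.2.1)
        = W.countP fun x => x.2.2.1 := by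
      rw [List.countP_map]; rfl
    simp only [sfmpP, sfmpQ, sfmpX, List.map_cons, List.prod_cons, sfsgn, hcnt]
    calc (if y.2.2.1 then y.1 else 1) * sfmpP W * ((if y.2.2.2 then y.1 else 1) * sfmpQ W)
        = (if y.2.2.1 then y.1 else 1) * (sfmpP W * (if y.2.2.2 then y.1 else 1)) * sfmpQ W := by
          rw [mul_assoc, mul_assoc, mul_assoc]
      _ = (if y.2.2.2 then (-1:ℂ) ^ (W.countP fun x => x.2.2.1) else 1) •
          ((if y.2.2.1 then y.1 else 1) * (if y.2.2.2 then y.1 else 1) * (sfmpP W * sfmpQ W)) := by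
          rw [hcomm, mul_smul_comm, smul_mul_assoc]
          rw [mul_assoc, mul_assoc, mul_assoc]
      _ = (if y.2.2.2 then (-1:ℂ) ^ (W.countP fun x => x.2.2.1) else 1) •
          ((if y.2.2.1 && y.2.2.2 then y.2.1 else 1) •
            ((if xor y.2.2.1 y.2.2.2 then y.1 else 1) * (sfsgn (W.map (·.2)) • sfmpX W))) := by
          rw [hheads, ih', smul_mul_assoc]
      _ = ((if y.2.2.2 then (-1:ℂ) ^ (W.countP fun x => x.2.2.1) else 1) *
            (if y.2.2.1 && y.2.2.2 then y.2.1 else 1) * sfsgn (W.map (·.2))) •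
          ((if xor y.2.2.1 y.2.2.2 then y.1 else 1) * sfmpX W) := by
          rw [mul_smul_comm, smul_smul, smul_smul, mul_assoc]

lemma sfsgn_pm (S : List (ℂ × Bool × Bool)) (h : ∀ x ∈ S, ¬(x.2.1 = true ∧ x.2.2 = true)) :
    sfsgn S = 1 ∨ sfsgn S = -1 := by
  induction S with
  | nil => left; rfl
  | cons x S ih =>
    have hx := h x (List.mem_cons_self (a := x) (l := S))
    have ih' := ih fun z hz => h z (List.mem_cons_of_mem x hz)
    have h1 : (if x.2.1 && x.2.2 then x.1 else 1) = 1 := by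
      rcases hb1 : x.2.1 with _ | _ <;> rcases hb2 : x.2.2 with _ | _ <;>
        simp_all
    have h2 : (if x.2.2 then (-1 : ℂ) ^ (S.countP (·.2.1)) else 1) = 1 ∨
        (if x.2.2 then (-1 : ℂ) ^ (S.countP (·.2.1)) else 1) = -1 := by
      rcases hb2 : x.2.2 with _ | _
      · left; simp
      · simp only [if_true]
        rcases Nat.even_or_odd (S.countP (·.2.1)) with he | ho
        · left; exact he.neg_one_pow
        · right; exact ho.neg_one_pow
    rw [sfsgn, h1, mul_one]
    rcases h2 with h2 | h2 <;> rcases ih' with h3 | h3 <;> rw [h2, h3] <;> norm_num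

def sfswap : (ℂ × Bool × Bool) → (ℂ × Bool × Bool) := fun x => (x.1, x.2.2, x.2.1)

lemma sfsgn_mul_swap (S : List (ℂ × Bool × Bool)) (h : ∀ x ∈ S, x.2.2 = !x.2.1) :
    sfsgn S * sfsgn (S.map sfswap)
      = (-1:ℂ) ^ (S.countP (·.2.1) * S.countP (·.2.2)) := by
  induction S with
  | nil => simp [sfsgn]
  | cons x S ih =>
    have hx := h x (List.mem_cons_self (a := x) (l := S))
    have ih' := ih fun z hz => h z (List.mem_cons_of_mem x hz)
    have hcnt : (S.map sfswap).countP (·.2.1) = S.countP (·.2.2) := by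
      rw [List.countP_map]; rfl
    simp only [List.map_cons, sfsgn, List.countP_cons, hcnt]
    rcases hb1 : x.2.1 with _ | _
    · simp only [hb1, Bool.not_false] at hx
      simp only [hx, hb1, sfswap, if_true, Bool.false_eq_true, if_false, Bool.false_and,
        Bool.and_false, one_mul, mul_one, Bool.true_and, Bool.and_true]
      rw [mul_assoc, ih', ← pow_add]
      congr 1
      ring
    · simp only [hb1, Bool.not_true] at hx
      simp only [hx, hb1, sfswap, if_true, Bool.false_eq_true, if_false, Bool.false_and,
        Bool.and_false, one_mul, mul_one, Bool.true_and, Bool.and_true]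
      rw [mul_comm (sfsgn S), mul_assoc, mul_comm (sfsgn (S.map sfswap)), ih', ← pow_add]
      congr 1
      ring

lemma sfsgn_countP_compl (S : List (ℂ × Bool × Bool)) (h : ∀ x ∈ S, x.2.2 = !x.2.1) :
    S.countP (·.2.1) + S.countP (·.2.2) = S.length := by
  induction S with
  | nil => rfl
  | cons x S ih =>
    have hx := h x (List.mem_cons_self (a := x) (l := S))
    have ih' := ih fun z hz => h z (List.mem_cons_of_mem x hz)
    simp only [List.countP_cons, List.length_cons, hx]
    rcases hb1 : x.2.1 with _ | _ <;> simp [hb1] <;> omega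

lemma sfsgn_swap_eq (S : List (ℂ × Bool × Bool)) (h : ∀ x ∈ S, x.2.2 = !x.2.1)
    (hodd : Odd S.length) :
    sfsgn (S.map sfswap) = sfsgn S ∧ sfsgn S * sfsgn (S.map sfswap) = 1 := by
  have hmul := sfsgn_mul_swap S h
  have hcnt := sfsgn_countP_compl S h
  have hev : Even (S.countP (·.2.1) * S.countP (·.2.2)) := by
    by_contra hodd2
    rw [Nat.even_mul, not_or] at hodd2
    have h1 := Nat.odd_iff.mp (Nat.not_even_iff_odd.mp hodd2.1)
    have h2 := Nat.odd_iff.mp (Nat.not_even_iff_odd.mp hodd2.2)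
    have h3 := Nat.odd_iff.mp hodd
    omega
  have h1 : sfsgn S * sfsgn (S.map sfswap) = 1 := by rw [hmul]; exact hev.neg_one_pow
  have hpm := sfsgn_pm S (fun x hx => by
    rw [h x hx]; rcases x.2.1 with _ | _ <;> simp)
  refine ⟨?_, h1⟩
  rcases hpm with hp | hp <;> rw [hp] at h1 ⊢
  · rwa [one_mul] at h1
  · linear_combination -h1

end Generic

section SFlemmas
variable {d : ℕ}

lemma sf_ee (i j : Fin d) : eg d i * eg d j = -(eg d j * eg d i) := by
  have h := RingQuot.mkAlgHom_rel ℂ (SFRel.ee (d := d) i j)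
  simp only [map_mul, map_neg] at h; exact h

lemma sf_ff (i j : Fin d) : fg d i * fg d j = -(fg d j * fg d i) := by
  have h := RingQuot.mkAlgHom_rel ℂ (SFRel.ff (d := d) i j)
  simp only [map_mul, map_neg] at h; exact h

lemma sf_ef (i j : Fin d) : eg d i * fg d j = -(fg d j * eg d i) := by
  have h := RingQuot.mkAlgHom_rel ℂ (SFRel.ef (d := d) i j)
  simp only [map_mul, map_neg] at h; exact h

lemma sf_fe (i j : Fin d) : fg d i * eg d j = -(eg d j * fg d i) := by
  rw [sf_ef j i, neg_neg]

lemma sf_Ke (i : Fin d) : Kg d * eg d i = -(eg d i * Kg d) := by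
  have h := RingQuot.mkAlgHom_rel ℂ (SFRel.Ke (d := d) i)
  simp only [map_mul, map_neg] at h; exact h

lemma sf_Kf (i : Fin d) : Kg d * fg d i = -(fg d i * Kg d) := by
  have h := RingQuot.mkAlgHom_rel ℂ (SFRel.Kf (d := d) i)
  simp only [map_mul, map_neg] at h; exact h

lemma sf_eK (i : Fin d) : eg d i * Kg d = -(Kg d * eg d i) := by
  rw [sf_Ke i, neg_neg]

lemma sf_fK (i : Fin d) : fg d i * Kg d = -(Kg d * fg d i) := by
  rw [sf_Kf i, neg_neg]

lemma sf_Ksq : Kg d * Kg d = 1 := by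
  have h := RingQuot.mkAlgHom_rel ℂ (SFRel.Ksq (d := d))
  simp only [map_mul, map_one] at h; exact h

lemma sf_sq_zero {x : SF d} (h : x * x = -(x * x)) : x * x = 0 := by
  have h2 : (2 : ℂ) • (x * x) = 0 := by
    rw [two_smul]
    nth_rewrite 2 [h]
    abel
  have := congrArg (fun z => ((2 : ℂ)⁻¹) • z) h2
  simpa [smul_smul, inv_mul_cancel₀ (two_ne_zero (α := ℂ))] using this

lemma sf_esq (i : Fin d) : eg d i * eg d i = 0 := sf_sq_zero (sf_ee i i)
lemma sf_fsq (i : Fin d) : fg d i * fg d i = 0 := sf_sq_zero (sf_ff i i)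

end SFlemmas

/-- The list of cells encoding the product `SFmono p * SFmono q`. -/
noncomputable def SFW (d : ℕ) (p q : (Fin d → Bool) × (Fin d → Bool) × Bool) :
    List (SF d × ℂ × Bool × Bool) :=
  (List.ofFn (fun i : Fin d =>
    [(eg d i, (0 : ℂ), p.1 i, q.1 i), (fg d i, (0 : ℂ), p.2.1 i, q.2.1 i)])).flatten
    ++ [(Kg d, (1 : ℂ), p.2.2, q.2.2)]



lemma SFW_mpP (d : ℕ) (p q : (Fin d → Bool) × (Fin d → Bool) × Bool) :
    sfmpP (SFW d p q) = SFmono d p.1 p.2.1 p.2.2 := by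
  have h1 : (List.map (fun x => if x.2.2.1 then x.1 else 1) (SFW d p q)) =
      (List.ofFn (fun i : Fin d =>
        [(if p.1 i then eg d i else 1), (if p.2.1 i then fg d i else 1)])).flatten
        ++ [if p.2.2 then Kg d else 1] := by
    simp only [SFW, List.map_append, List.map_flatten, List.map_ofFn, List.map_cons,
      List.map_nil]
    rfl
  have h2 : (List.ofFn (List.prod ∘ fun i : Fin d =>
        [(if p.1 i then eg d i else 1), (if p.2.1 i then fg d i else 1)]))
      = List.ofFn fun i : Fin d =>
          (if p.1 i then eg d i else 1) * (if p.2.1 i then fg d i else 1) := by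
    congr 1
    funext i
    simp
  rw [sfmpP, h1, List.prod_append, List.prod_flatten, List.map_ofFn, h2,
    List.prod_singleton, SFmono]

lemma SFW_mpQ (d : ℕ) (p q : (Fin d → Bool) × (Fin d → Bool) × Bool) :
    sfmpQ (SFW d p q) = SFmono d q.1 q.2.1 q.2.2 := by
  have h1 : (List.map (fun x => if x.2.2.2 then x.1 else 1) (SFW d p q)) =
      (List.ofFn (fun i : Fin d =>
        [(if q.1 i then eg d i else 1), (if q.2.1 i then fg d i else 1)])).flatten
        ++ [if q.2.2 then Kg d else 1] := by
    simp only [SFW, List.map_append, List.map_flatten, List.map_ofFn, List.map_cons,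
      List.map_nil]
    rfl
  have h2 : (List.ofFn (List.prod ∘ fun i : Fin d =>
        [(if q.1 i then eg d i else 1), (if q.2.1 i then fg d i else 1)]))
      = List.ofFn fun i : Fin d =>
          (if q.1 i then eg d i else 1) * (if q.2.1 i then fg d i else 1) := by
    congr 1
    funext i
    simp
  rw [sfmpQ, h1, List.prod_append, List.prod_flatten, List.map_ofFn, h2,
    List.prod_singleton, SFmono]

lemma SFW_mpX (d : ℕ) (p q : (Fin d → Bool) × (Fin d → Bool) × Bool) :
    sfmpX (SFW d p q) =
      SFmono d (fun i => xor (p.1 i) (q.1 i)) (fun i => xor (p.2.1 i) (q.2.1 i))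
        (xor p.2.2 q.2.2) := by
  have h1 : (List.map (fun x => if xor x.2.2.1 x.2.2.2 then x.1 else 1) (SFW d p q)) =
      (List.ofFn (fun i : Fin d =>
        [(if xor (p.1 i) (q.1 i) then eg d i else 1),
         (if xor (p.2.1 i) (q.2.1 i) then fg d i else 1)])).flatten
        ++ [if xor p.2.2 q.2.2 then Kg d else 1] := by
    simp only [SFW, List.map_append, List.map_flatten, List.map_ofFn, List.map_cons,
      List.map_nil]
    rfl
  have h2 : (List.ofFn (List.prod ∘ fun i : Fin d =>
        [(if xor (p.1 i) (q.1 i) then eg d i else 1),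
         (if xor (p.2.1 i) (q.2.1 i) then fg d i else 1)]))
      = List.ofFn fun i : Fin d =>
          (if xor (p.1 i) (q.1 i) then eg d i else 1) *
            (if xor (p.2.1 i) (q.2.1 i) then fg d i else 1) := by
    congr 1
    funext i
    simp
  rw [sfmpX, h1, List.prod_append, List.prod_flatten, List.map_ofFn, h2,
    List.prod_singleton, SFmono]

lemma SFW_pairwise (d : ℕ) (p q : (Fin d → Bool) × (Fin d → Bool) × Bool) :
    (SFW d p q).Pairwise fun x y => x.1 * y.1 = -(y.1 * x.1) := by
  rw [SFW, List.pairwise_append]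
  refine ⟨?_, List.pairwise_singleton _ _, ?_⟩
  · rw [List.pairwise_flatten]
    constructor
    · intro l hl
      rw [List.mem_ofFn] at hl
      obtain ⟨i, rfl⟩ := hl
      refine List.Pairwise.cons ?_ (List.pairwise_singleton _ _)
      intro y hy
      simp only [List.mem_singleton] at hy
      subst hy
      simpa using sf_ef i i
    · rw [List.pairwise_ofFn]
      intro i j hij x hx y hy
      simp only [List.mem_cons, List.mem_singleton, List.not_mem_nil, or_false] at hx hy
      rcases hx with rfl | rfl <;> rcases hy with rfl | rfl
      · simpa using sf_ee i j
      · simpa using sf_ef i j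
      · simpa using sf_fe i j
      · simpa using sf_ff i j
  · intro x hx y hy
    simp only [List.mem_singleton] at hy
    subst hy
    simp only [List.mem_flatten, List.mem_ofFn, Set.mem_range] at hx
    obtain ⟨l, ⟨i, rfl⟩, hxl⟩ := hx
    simp only [List.mem_cons, List.mem_singleton, List.not_mem_nil, or_false] at hxl
    rcases hxl with rfl | rfl
    · simpa using sf_eK i
    · simpa using sf_fK i

lemma SFW_sq (d : ℕ) (p q : (Fin d → Bool) × (Fin d → Bool) × Bool) :
    ∀ x ∈ SFW d p q, x.1 * x.1 = algebraMap ℂ (SF d) x.2.1 := by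
  intro x hx
  simp only [SFW, List.mem_append, List.mem_flatten, List.mem_ofFn, Set.mem_range,
    List.mem_singleton] at hx
  rcases hx with ⟨l, ⟨i, rfl⟩, hxl⟩ | rfl
  · simp only [List.mem_cons, List.mem_singleton, List.not_mem_nil, or_false] at hxl
    rcases hxl with rfl | rfl
    · simpa using sf_esq i
    · simpa using sf_fsq i
  · simpa using sf_Ksq

lemma SFW_data (d : ℕ) (p q : (Fin d → Bool) × (Fin d → Bool) × Bool) :
    (SFW d p q).map (·.2) =
      (List.ofFn (fun i : Fin d =>
        [((0:ℂ), p.1 i, q.1 i), ((0:ℂ), p.2.1 i, q.2.1 i)])).flatten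
        ++ [((1:ℂ), p.2.2, q.2.2)] := by
  simp only [SFW, List.map_append, List.map_flatten, List.map_ofFn, List.map_cons,
    List.map_nil]
  rfl

lemma SFW_data_mem (d : ℕ) (p q : (Fin d → Bool) × (Fin d → Bool) × Bool) :
    ∀ x ∈ (SFW d p q).map (·.2),
      (∃ i : Fin d, x = ((0:ℂ), p.1 i, q.1 i) ∨ x = ((0:ℂ), p.2.1 i, q.2.1 i)) ∨
        x = ((1:ℂ), p.2.2, q.2.2) := by
  intro x hx
  rw [SFW_data] at hx
  simp only [List.mem_append, List.mem_flatten, List.mem_ofFn, Set.mem_range,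
    List.mem_singleton] at hx
  rcases hx with ⟨l, ⟨i, rfl⟩, hxl⟩ | rfl
  · simp only [List.mem_cons, List.mem_singleton, List.not_mem_nil, or_false] at hxl
    exact Or.inl ⟨i, hxl⟩
  · exact Or.inr rfl

lemma SFW_data_length (d : ℕ) (p q : (Fin d → Bool) × (Fin d → Bool) × Bool) :
    ((SFW d p q).map (·.2)).length = 2 * d + 1 := by
  rw [SFW_data]
  have h1 : (List.ofFn (List.length ∘ fun i : Fin d =>
      [((0:ℂ), p.1 i, q.1 i), ((0:ℂ), p.2.1 i, q.2.1 i)])) = List.ofFn (fun _ : Fin d => 2) := by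
    congr 1
  simp [List.length_flatten, List.map_ofFn, h1, List.sum_ofFn, Finset.sum_const, mul_comm]

lemma SFW_data_swap (d : ℕ) (p q : (Fin d → Bool) × (Fin d → Bool) × Bool) :
    ((SFW d p q).map (·.2)).map sfswap = (SFW d q p).map (·.2) := by
  rw [SFW_data, SFW_data, List.map_append, List.map_flatten, List.map_ofFn]
  rfl

lemma SF_mul_mono (d : ℕ) (p q : (Fin d → Bool) × (Fin d → Bool) × Bool) :
    SFmono d p.1 p.2.1 p.2.2 * SFmono d q.1 q.2.1 q.2.2
      = sfsgn ((SFW d p q).map (·.2)) •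
        SFmono d (fun i => xor (p.1 i) (q.1 i)) (fun i => xor (p.2.1 i) (q.2.1 i))
          (xor p.2.2 q.2.2) := by
  rw [← SFW_mpP d p q, ← SFW_mpQ d p q, ← SFW_mpX d p q]
  exact sfmp_mul _ (SFW_pairwise d p q) (SFW_sq d p q)

/-- The complementary monomial. -/
def SFcompl (d : ℕ) (p : (Fin d → Bool) × (Fin d → Bool) × Bool) :
    (Fin d → Bool) × (Fin d → Bool) × Bool :=
  (fun i => !(p.1 i), fun i => !(p.2.1 i), !p.2.2)

lemma SFcompl_compl (d : ℕ) (p : (Fin d → Bool) × (Fin d → Bool) × Bool) :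
    SFcompl d (SFcompl d p) = p := by
  simp [SFcompl]

lemma SFW_compl_masks (d : ℕ) (p : (Fin d → Bool) × (Fin d → Bool) × Bool) :
    ∀ x ∈ (SFW d p (SFcompl d p)).map (·.2), x.2.2 = !x.2.1 := by
  intro x hx
  rcases SFW_data_mem d p (SFcompl d p) x hx with ⟨i, rfl | rfl⟩ | rfl <;> rfl

/-- The sign of the product of a monomial and its complement. -/
noncomputable def SFcsgn (d : ℕ) (p : (Fin d → Bool) × (Fin d → Bool) × Bool) : ℂ :=
  sfsgn ((SFW d p (SFcompl d p)).map (·.2))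

lemma SFcsgn_pm (d : ℕ) (p : (Fin d → Bool) × (Fin d → Bool) × Bool) :
    SFcsgn d p = 1 ∨ SFcsgn d p = -1 := by
  apply sfsgn_pm
  intro x hx
  have := SFW_compl_masks d p x hx
  rw [this]
  rcases x.2.1 with _ | _ <;> simp

lemma SFcsgn_mul_compl (d : ℕ) (p : (Fin d → Bool) × (Fin d → Bool) × Bool) :
    SFcsgn d p * SFcsgn d (SFcompl d p) = 1 ∧ SFcsgn d (SFcompl d p) = SFcsgn d p := by
  have hodd : Odd ((SFW d p (SFcompl d p)).map (·.2)).length := by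
    rw [SFW_data_length]; exact ⟨d, by ring⟩
  have h := sfsgn_swap_eq _ (SFW_compl_masks d p) hodd
  have hsw : ((SFW d p (SFcompl d p)).map (·.2)).map sfswap
      = (SFW d (SFcompl d p) (SFcompl d (SFcompl d p))).map (·.2) := by
    rw [SFW_data_swap, SFcompl_compl]
  constructor
  · have := h.2
    rw [hsw] at this
    exact this
  · have := h.1
    rw [hsw] at this
    exact this

lemma SF_mul_compl (d : ℕ) (p : (Fin d → Bool) × (Fin d → Bool) × Bool) :
    SFmono d p.1 p.2.1 p.2.2 *
        SFmono d (SFcompl d p).1 (SFcompl d p).2.1 (SFcompl d p).2.2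
      = SFcsgn d p • topSF d := by
  rw [SF_mul_mono]
  congr 1
  rw [topSF]
  congr 1
  · funext i; rcases hb : p.1 i with _ | _ <;> simp [SFcompl, hb]
  · funext i; rcases hb : p.2.1 i with _ | _ <;> simp [SFcompl, hb]
  · rcases hb : p.2.2 with _ | _ <;> simp [SFcompl, hb]

lemma SF_xor_cond (d : ℕ) (p q : (Fin d → Bool) × (Fin d → Bool) × Bool) :
    ((fun i => xor (p.1 i) (q.1 i)) = (fun _ => true) ∧
      (fun i => xor (p.2.1 i) (q.2.1 i)) = (fun _ => true) ∧ xor p.2.2 q.2.2 = true)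
    ↔ q = SFcompl d p := by
  constructor
  · rintro ⟨h1, h2, h3⟩
    have e1 : q.1 = fun i => !(p.1 i) := by
      funext i
      have := congrFun h1 i
      rcases hb : p.1 i with _ | _ <;> rcases hc : q.1 i with _ | _ <;> simp_all
    have e2 : q.2.1 = fun i => !(p.2.1 i) := by
      funext i
      have := congrFun h2 i
      rcases hb : p.2.1 i with _ | _ <;> rcases hc : q.2.1 i with _ | _ <;> simp_all
    have e3 : q.2.2 = !p.2.2 := by
      rcases hb : p.2.2 with _ | _ <;> rcases hc : q.2.2 with _ | _ <;> simp_all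
    rw [Prod.ext_iff, Prod.ext_iff]
    exact ⟨e1, e2, e3⟩
  · rintro rfl
    refine ⟨funext fun i => ?_, funext fun i => ?_, ?_⟩
    · rcases hb : p.1 i with _ | _ <;> simp [SFcompl, hb]
    · rcases hb : p.2.1 i with _ | _ <;> simp [SFcompl, hb]
    · rcases hb : p.2.2 with _ | _ <;> simp [SFcompl, hb]

/-- For every basis monomial `a ∈ Ω` there is a unique basis monomial
`b ∈ Ω` with `ab = ±(∏ᵢ eᵢfᵢ)K`; for such a pair moreover `ab = ba`.  Hence the Gram
matrix `(φ(ab))_{a,b∈Ω}` of the symmetrizing form is invertible. -/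
theorem sf_gram_matrix_invertible (d : ℕ) (φ : SF d →ₗ[ℂ] ℂ)
    (hφval : ∀ (m n : Fin d → Bool) (ℓ : Bool),
      φ (SFmono d m n ℓ) =
        if m = (fun _ => true) ∧ n = (fun _ => true) ∧ ℓ = true then 1 else 0) :
    (∀ p : (Fin d → Bool) × (Fin d → Bool) × Bool,
      ∃! q : (Fin d → Bool) × (Fin d → Bool) × Bool,
        SFmono d p.1 p.2.1 p.2.2 * SFmono d q.1 q.2.1 q.2.2 = topSF d ∨
        SFmono d p.1 p.2.1 p.2.2 * SFmono d q.1 q.2.1 q.2.2 = -topSF d) ∧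
    (∀ p q : (Fin d → Bool) × (Fin d → Bool) × Bool,
      (SFmono d p.1 p.2.1 p.2.2 * SFmono d q.1 q.2.1 q.2.2 = topSF d ∨
        SFmono d p.1 p.2.1 p.2.2 * SFmono d q.1 q.2.1 q.2.2 = -topSF d) →
      SFmono d p.1 p.2.1 p.2.2 * SFmono d q.1 q.2.1 q.2.2 =
        SFmono d q.1 q.2.1 q.2.2 * SFmono d p.1 p.2.1 p.2.2) ∧
    IsUnit (Matrix.of fun p q : (Fin d → Bool) × (Fin d → Bool) × Bool =>
      φ (SFmono d p.1 p.2.1 p.2.2 * SFmono d q.1 q.2.1 q.2.2)) := by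
  have htop : φ (topSF d) = 1 := by
    rw [topSF, hφval]
    exact if_pos ⟨rfl, rfl, rfl⟩
  have hq_of : ∀ p q : (Fin d → Bool) × (Fin d → Bool) × Bool,
      (SFmono d p.1 p.2.1 p.2.2 * SFmono d q.1 q.2.1 q.2.2 = topSF d ∨
        SFmono d p.1 p.2.1 p.2.2 * SFmono d q.1 q.2.1 q.2.2 = -topSF d) →
      q = SFcompl d p := by
    intro p q h
    by_contra hne
    have hphi : φ (SFmono d p.1 p.2.1 p.2.2 * SFmono d q.1 q.2.1 q.2.2) = 0 := by
      rw [SF_mul_mono, map_smul, smul_eq_mul, hφval, if_neg, mul_zero]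
      intro hcond
      exact hne ((SF_xor_cond d p q).mp hcond)
    rcases h with h | h <;> rw [h] at hphi
    · rw [htop] at hphi; exact one_ne_zero hphi
    · rw [map_neg, htop] at hphi; norm_num at hphi
  refine ⟨?_, ?_, ?_⟩
  · intro p
    refine ⟨SFcompl d p, ?_, fun q h => hq_of p q h⟩
    rcases SFcsgn_pm d p with hs | hs
    · left; rw [SF_mul_compl, hs, one_smul]
    · right; rw [SF_mul_compl, hs, neg_one_smul]
  · intro p q h
    have hq := hq_of p q h
    subst hq
    rw [SF_mul_mono d p (SFcompl d p), SF_mul_mono d (SFcompl d p) p]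
    have hs : sfsgn ((SFW d (SFcompl d p) p).map (·.2))
        = sfsgn ((SFW d p (SFcompl d p)).map (·.2)) := by
      have h2 := (SFcsgn_mul_compl d p).2
      rw [SFcsgn, SFcsgn, SFcompl_compl] at h2
      exact h2
    have e1 : (fun i => xor ((SFcompl d p).1 i) (p.1 i))
        = fun i => xor (p.1 i) ((SFcompl d p).1 i) := funext fun i => Bool.xor_comm _ _
    have e2 : (fun i => xor ((SFcompl d p).2.1 i) (p.2.1 i))
        = fun i => xor (p.2.1 i) ((SFcompl d p).2.1 i) := funext fun i => Bool.xor_comm _ _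
    have e3 : xor (SFcompl d p).2.2 p.2.2 = xor p.2.2 (SFcompl d p).2.2 := Bool.xor_comm _ _
    rw [hs, e1, e2, e3]
  · have hMval : ∀ p q : (Fin d → Bool) × (Fin d → Bool) × Bool,
        φ (SFmono d p.1 p.2.1 p.2.2 * SFmono d q.1 q.2.1 q.2.2)
          = if q = SFcompl d p then SFcsgn d p else 0 := by
      intro p q
      by_cases hq : q = SFcompl d p
      · subst hq
        rw [SF_mul_compl, map_smul, smul_eq_mul, htop, mul_one, if_pos rfl]
      · rw [SF_mul_mono, map_smul, smul_eq_mul, hφval, if_neg, mul_zero, if_neg hq]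
        intro hcond
        exact hq ((SF_xor_cond d p q).mp hcond)
    refine (Matrix.isUnit_iff_isUnit_det _).mpr (Matrix.isUnit_det_of_right_inverse
      (B := Matrix.of fun p q : (Fin d → Bool) × (Fin d → Bool) × Bool =>
        φ (SFmono d p.1 p.2.1 p.2.2 * SFmono d q.1 q.2.1 q.2.2)) ?_)
    ext p r
    rw [Matrix.mul_apply]
    simp only [Matrix.of_apply, hMval]
    rw [Finset.sum_congr rfl (fun q _ => by rw [ite_mul, zero_mul])]
    rw [Finset.sum_ite_eq' Finset.univ (SFcompl d p)
      (fun q => SFcsgn d p * if r = SFcompl d q then SFcsgn d q else 0)]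
    simp only [Finset.mem_univ, if_true, SFcompl_compl]
    rw [mul_ite, mul_zero, (SFcsgn_mul_compl d p).1]
    rw [Matrix.one_apply]
    by_cases hr : r = p
    · subst hr; simp
    · rw [if_neg hr, if_neg (fun h => hr h.symm)]
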